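/- Let A, A_k be real n×n matrices, B₁ a real n×m matrix, B₂ a real n×r matrix, B_k a real n×m matrix, C₁, C₂ real m×n matrices, C_k a real r×n matrix, and D₂₁ a real m×m matrix. Set R = C₁·B₁ + B₁ᵀ·C₁ᵀ and assume R is invertible. Define A_c = [[A, B₂·C_k],[B_k·C₂, A_k]], B_c = [B₁; B_k·D₂₁], C_c = [C₁, 0]. Suppose the real symmetric 2n×2n matrix Σ = [[Σ₁₁, Σ₁₂],[Σ₁₂ᵀ, Σ₂₂]] (blocks n×n) is positive definite and satisfies Σ·A_c + A_cᵀ·Σ + (B_cᵀ·Σ − C_c·A_c)ᵀ·R⁻¹·(B_cᵀ·Σ − C_c·A_c) = 0. Then there exist a real symmetric positive definite n×n matrix P, a real symmetric positive definite n×n matrix Z, a real r×n matrix F, and a real n×m matrix L such that: (a) P·(A + B₂·F) + (A + B₂·F)ᵀ·P + Q̃ᵀ·R⁻¹·Q̃ = 0 with Q̃ = C₁·(A + B₂·F) − B₁ᵀ·P; (b) Z·(A + L·C₂)ᵀ + (A + L·C₂)·Z + Q̄·R⁻¹·Q̄ᵀ = 0 with Q̄ = B₁ + L·D₂₁ − Z·Aᵀ·C₁ᵀ;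 and (c) every eigenvalue λ ∈ ℂ of Z·P (regarded as a complex matrix via the entrywise embedding ℝ → ℂ) satisfies |λ| ≤ 1. -/

import Mathlib

/-!
For any `V`, the compression `Vᵀ · ARE(Σ) · V` of the closed-loop Riccati expression is again a
Riccati-type expression, now in `ΣV` and `A_c V`. With `V = [I; G]`, `G = -Σ₂₂⁻¹Σ₁₂ᵀ`, one gets
`ΣV = [P; 0]` for the Schur complement `P = Σ₁₁ - Σ₁₂Σ₂₂⁻¹Σ₁₂ᵀ`, and the compressed equation is
the state-feedback equation (a) with `F = C_k G`. With `V = [Z; 0]`, `Z = Σ₁₁⁻¹`, one gets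
`ΣV = [I; Σ₁₂ᵀZ]`, and the compressed equation is the dual equation (b) with `L = ZΣ₁₂B_k`.
Finally `0 ≤ P ≤ Σ₁₁`, so an eigenpair `ZPv = λv` gives `v*Pv = λ v*Σ₁₁v` with
`0 ≤ v*Pv ≤ v*Σ₁₁v`, hence `0 ≤ λ ≤ 1`.
-/

open Matrix
open scoped ComplexOrder

section Riccati

variable {α N M K : Type*} [CommRing α] [Fintype N] [Fintype M]

def niRiccati (S Ac : Matrix N N α) (B : Matrix N M α) (C : Matrix M N α) (J : Matrix M M α) :
    Matrix N N α :=
  S * Ac + Acᵀ * S + (Bᵀ * S - C * Ac)ᵀ * J * (Bᵀ * S - C * Ac)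

theorem transpose_mul_niRiccati_mul {S : Matrix N N α} (hS : S.IsSymm) (Ac : Matrix N N α)
    (B : Matrix N M α) (C : Matrix M N α) (J : Matrix M M α) (V : Matrix N K α) :
    Vᵀ * niRiccati S Ac B C J * V =
      (S * V)ᵀ * (Ac * V) + (Ac * V)ᵀ * (S * V) +
        (Bᵀ * (S * V) - C * (Ac * V))ᵀ * J * (Bᵀ * (S * V) - C * (Ac * V)) := by
  simp only [niRiccati, transpose_mul, transpose_sub, Matrix.mul_add, Matrix.add_mul,
    Matrix.mul_sub, Matrix.sub_mul, Matrix.mul_assoc, hS.eq]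

end Riccati

section ClosedLoop

variable {α n n' m r : Type*} [CommRing α] [Fintype n] [Fintype n'] [Fintype m] [Fintype r]
  {Sg : Matrix (n ⊕ n') (n ⊕ n') α}

theorem transpose_mul_add_eq_of_mul_fromRows_eq {X Y : Matrix n n α} {G H : Matrix n' n α}
    (h : Sg * fromRows X G = fromRows Y H) :
    Xᵀ * Y + Gᵀ * H = (fromRows X G)ᵀ * Sg * fromRows X G := by
  rw [Matrix.mul_assoc, h, transpose_fromRows, fromCols_mul_fromRows]

theorem Matrix.IsSymm.transpose_mul_add_of_mul_fromRows_eq (hSg : Sg.IsSymm) {X Y : Matrix n n α}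
    {G H : Matrix n' n α} (h : Sg * fromRows X G = fromRows Y H) :
    (Xᵀ * Y + Gᵀ * H).IsSymm := by
  rw [transpose_mul_add_eq_of_mul_fromRows_eq h, IsSymm, transpose_mul, transpose_mul,
    transpose_transpose, hSg.eq, Matrix.mul_assoc]

variable [DecidableEq n] {A : Matrix n n α} {Ak : Matrix n' n' α} {B₁ : Matrix n m α}
  {Bk : Matrix n' m α} {B₂ : Matrix n r α} {C₁ C₂ : Matrix m n α} {Ck : Matrix r n' α}
  {D₂₁ J : Matrix m m α}

theorem stateFeedbackRiccati_of_closedLoop (hSg : Sg.IsSymm) {G : Matrix n' n α}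
    {P : Matrix n n α} (hP : Sg * fromRows (1 : Matrix n n α) G = fromRows P 0)
    (hric : niRiccati Sg (fromBlocks A (B₂ * Ck) (Bk * C₂) Ak) (fromRows B₁ (Bk * D₂₁))
      (fromCols C₁ 0) J = 0) :
    P * (A + B₂ * (Ck * G)) + (A + B₂ * (Ck * G))ᵀ * P +
      (C₁ * (A + B₂ * (Ck * G)) - B₁ᵀ * P)ᵀ * J * (C₁ * (A + B₂ * (Ck * G)) - B₁ᵀ * P) = 0 := by
  have hPt : Pᵀ = P := by
    simpa using (IsSymm.transpose_mul_add_of_mul_fromRows_eq hSg hP).eq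
  have := transpose_mul_niRiccati_mul hSg (fromBlocks A (B₂ * Ck) (Bk * C₂) Ak)
    (fromRows B₁ (Bk * D₂₁)) (fromCols C₁ 0) J (fromRows (1 : Matrix n n α) G)
  rw [hric, Matrix.mul_zero, Matrix.zero_mul, hP] at this
  rw [← neg_sub (B₁ᵀ * P), transpose_neg, Matrix.neg_mul, Matrix.neg_mul, Matrix.mul_neg, neg_neg]
  simpa [fromBlocks_mul_fromRows, transpose_fromRows, fromCols_mul_fromRows, hPt,
    transpose_mul, transpose_sub, Matrix.mul_assoc, eq_comm] using this

theorem outputInjectionRiccati_of_closedLoop (hSg : Sg.IsSymm) {Z : Matrix n n α}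
    {H : Matrix n' n α} (hZ : Sg * fromRows Z (0 : Matrix n' n α) = fromRows (1 : Matrix n n α) H)
    (hric : niRiccati Sg (fromBlocks A (B₂ * Ck) (Bk * C₂) Ak) (fromRows B₁ (Bk * D₂₁))
      (fromCols C₁ 0) J = 0) :
    Z * (A + Hᵀ * Bk * C₂)ᵀ + (A + Hᵀ * Bk * C₂) * Z +
      (B₁ + Hᵀ * Bk * D₂₁ - Z * Aᵀ * C₁ᵀ) * J * (B₁ + Hᵀ * Bk * D₂₁ - Z * Aᵀ * C₁ᵀ)ᵀ = 0 := by
  have hZt : Zᵀ = Z := by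
    simpa [eq_comm] using (IsSymm.transpose_mul_add_of_mul_fromRows_eq hSg hZ).eq
  have := transpose_mul_niRiccati_mul hSg (fromBlocks A (B₂ * Ck) (Bk * C₂) Ak)
    (fromRows B₁ (Bk * D₂₁)) (fromCols C₁ 0) J (fromRows Z (0 : Matrix n' n α))
  rw [hric, Matrix.mul_zero, Matrix.zero_mul, hZ] at this
  simp only [transpose_fromRows, transpose_one, fromBlocks_mul_fromRows, Matrix.mul_zero,
    add_zero, Matrix.mul_assoc, fromCols_mul_fromRows, Matrix.one_mul, transpose_mul, hZt,
    Matrix.mul_one, Matrix.zero_mul, transpose_sub, transpose_add, transpose_transpose,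
    Matrix.mul_add, Matrix.add_mul] at this ⊢
  convert this.symm using 1
  abel

end ClosedLoop

theorem Matrix.PosDef.of_mul_fromRows_one_eq {R n n' : Type*} [Ring R] [PartialOrder R]
    [StarRing R] [Fintype n] [Fintype n'] [DecidableEq n] {Sg : Matrix (n ⊕ n') (n ⊕ n') R}
    (hSg : Sg.PosDef) {G : Matrix n' n R} {P : Matrix n n R}
    (hP : Sg * fromRows (1 : Matrix n n R) G = fromRows P 0) : P.PosDef := by
  have hinj : Function.Injective (fromRows (1 : Matrix n n R) G).mulVec := fun x y h => by
    simpa using congrArg (· ∘ Sum.inl) h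
  convert hSg.conjTranspose_mul_mul_same hinj
  rw [Matrix.mul_assoc, hP, conjTranspose_fromRows_eq_fromCols_conjTranspose,
    fromCols_mul_fromRows]
  simp

theorem Matrix.IsHermitian.map_ofReal {n : Type*} {Q : Matrix n n ℝ} (hQ : Q.IsHermitian) :
    (Q.map Complex.ofReal).IsHermitian :=
  hQ.map _ fun _ => (Complex.conj_ofReal _).symm

section ComplexOfReal

variable {n : Type*} [Fintype n]

theorem Matrix.re_star_dotProduct_map_ofReal_mulVec (Q : Matrix n n ℝ) (v : n → ℂ) :
    (star v ⬝ᵥ (Q.map Complex.ofReal *ᵥ v)).re =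
      (fun i => (v i).re) ⬝ᵥ (Q *ᵥ fun i => (v i).re) +
        (fun i => (v i).im) ⬝ᵥ (Q *ᵥ fun i => (v i).im) := by
  simp [dotProduct, mulVec, Complex.re_sum, Finset.mul_sum, ← Finset.sum_add_distrib]

theorem Matrix.PosSemidef.map_ofReal {Q : Matrix n n ℝ} (hQ : Q.PosSemidef) :
    (Q.map Complex.ofReal).PosSemidef := by
  have hH := hQ.isHermitian.map_ofReal
  refine posSemidef_iff_dotProduct_mulVec.mpr ⟨hH, fun v => Complex.nonneg_iff.mpr
    ⟨?_, (hH.im_star_dotProduct_mulVec_self v).symm⟩⟩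
  have hre := hQ.dotProduct_mulVec_nonneg fun i => (v i).re
  have him := hQ.dotProduct_mulVec_nonneg fun i => (v i).im
  simp only [star_trivial] at hre him
  rw [re_star_dotProduct_map_ofReal_mulVec]
  positivity

theorem Matrix.PosDef.map_ofReal [DecidableEq n] {Q : Matrix n n ℝ} (hQ : Q.PosDef) :
    (Q.map Complex.ofReal).PosDef := by
  refine hQ.posSemidef.map_ofReal.posDef_iff_det_ne_zero.mpr ?_
  rw [show Q.map Complex.ofReal = Complex.ofRealHom.mapMatrix Q from rfl, ← RingHom.map_det]
  exact Complex.ofReal_ne_zero.mpr hQ.det_pos.ne'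

end ComplexOfReal

theorem Matrix.exists_mulVec_eq_smul_of_mem_spectrum {n K : Type*} [Fintype n] [DecidableEq n]
    [Field K] {M : Matrix n n K} {μ : K} (h : μ ∈ spectrum K M) :
    ∃ v, v ≠ 0 ∧ M *ᵥ v = μ • v := by
  rw [← spectrum_toLin', ← Module.End.hasEigenvalue_iff_mem_spectrum] at h
  obtain ⟨v, hv⟩ := h.exists_hasEigenvector
  exact ⟨v, hv.2, hv.apply_eq_smul⟩

theorem Matrix.norm_le_one_of_mem_spectrum_mul {n 𝕜 : Type*} [Fintype n] [DecidableEq n]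
    [RCLike 𝕜] {S Z P : Matrix n n 𝕜} (hS : S.PosDef) (hSZ : S * Z = 1) (hP : P.PosSemidef)
    (hSP : (S - P).PosSemidef) {μ : 𝕜} (hμ : μ ∈ spectrum 𝕜 (Z * P)) : ‖μ‖ ≤ 1 := by
  obtain ⟨v, hv, hμv⟩ := exists_mulVec_eq_smul_of_mem_spectrum hμ
  have hPv : P *ᵥ v = μ • (S *ᵥ v) := by
    rw [← mulVec_smul, ← hμv, mulVec_mulVec, ← Matrix.mul_assoc, hSZ, Matrix.one_mul]
  have ha : 0 < star v ⬝ᵥ (S *ᵥ v) := hS.dotProduct_mulVec_pos hv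
  have hp : 0 ≤ star v ⬝ᵥ (P *ᵥ v) := hP.dotProduct_mulVec_nonneg v
  have hpa : star v ⬝ᵥ (P *ᵥ v) ≤ star v ⬝ᵥ (S *ᵥ v) := by
    simpa [sub_mulVec, dotProduct_sub] using hSP.dotProduct_mulVec_nonneg v
  rw [hPv, dotProduct_smul, smul_eq_mul] at hp hpa
  have hnorm : ‖μ * star v ⬝ᵥ (S *ᵥ v)‖ ≤ ‖star v ⬝ᵥ (S *ᵥ v)‖ := by
    rw [← RCLike.ofReal_le_ofReal (K := 𝕜), RCLike.norm_of_nonneg' hp,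
      RCLike.norm_of_nonneg' ha.le]
    exact hpa
  rw [norm_mul] at hnorm
  exact (mul_le_iff_le_one_left (norm_pos_iff.mpr ha.ne')).mp hnorm

theorem stmt_12_general {n m r : ℕ}
    (A Ak : Matrix (Fin n) (Fin n) ℝ)
    (B₁ Bk : Matrix (Fin n) (Fin m) ℝ) (B₂ : Matrix (Fin n) (Fin r) ℝ)
    (C₁ C₂ : Matrix (Fin m) (Fin n) ℝ) (Ck : Matrix (Fin r) (Fin n) ℝ)
    (D₂₁ : Matrix (Fin m) (Fin m) ℝ)
    (R : Matrix (Fin m) (Fin m) ℝ)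
    (Ac : Matrix (Fin n ⊕ Fin n) (Fin n ⊕ Fin n) ℝ)
    (hAc : Ac = fromBlocks A (B₂ * Ck) (Bk * C₂) Ak)
    (Bc : Matrix (Fin n ⊕ Fin n) (Fin m) ℝ) (hBc : Bc = fromRows B₁ (Bk * D₂₁))
    (Cc : Matrix (Fin m) (Fin n ⊕ Fin n) ℝ) (hCc : Cc = fromCols C₁ 0)
    (S₁₁ S₁₂ S₂₂ : Matrix (Fin n) (Fin n) ℝ)
    (Sg : Matrix (Fin n ⊕ Fin n) (Fin n ⊕ Fin n) ℝ)
    (hSg : Sg = fromBlocks S₁₁ S₁₂ S₁₂ᵀ S₂₂) (hSgpd : Sg.PosDef)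
    (hric : Sg * Ac + Acᵀ * Sg + (Bcᵀ * Sg - Cc * Ac)ᵀ * R⁻¹ * (Bcᵀ * Sg - Cc * Ac) = 0) :
    ∃ (P Z : Matrix (Fin n) (Fin n) ℝ) (F : Matrix (Fin r) (Fin n) ℝ)
      (L : Matrix (Fin n) (Fin m) ℝ),
      P.PosDef ∧ Z.PosDef ∧
      (P * (A + B₂ * F) + (A + B₂ * F)ᵀ * P +
        (C₁ * (A + B₂ * F) - B₁ᵀ * P)ᵀ * R⁻¹ * (C₁ * (A + B₂ * F) - B₁ᵀ * P) = 0) ∧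
      (Z * (A + L * C₂)ᵀ + (A + L * C₂) * Z +
        (B₁ + L * D₂₁ - Z * Aᵀ * C₁ᵀ) * R⁻¹ * (B₁ + L * D₂₁ - Z * Aᵀ * C₁ᵀ)ᵀ = 0) ∧
      (∀ lam : ℂ, lam ∈ spectrum ℂ ((Z * P).map (Complex.ofReal)) →
        ‖lam‖ ≤ 1) := by
  subst hAc hBc hCc hSg
  have hsymm := isHermitian_iff_isSymm.mp hSgpd.isHermitian
  have h₁₁ : S₁₁.PosDef := hSgpd.submatrix Sum.inl_injective
  have h₂₂ : S₂₂.PosDef := hSgpd.submatrix Sum.inr_injective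
  set G := -(S₂₂⁻¹ * S₁₂ᵀ)
  set P := S₁₁ + S₁₂ * G
  set Z := S₁₁⁻¹
  have hP : fromBlocks S₁₁ S₁₂ S₁₂ᵀ S₂₂ * fromRows (1 : Matrix (Fin n) (Fin n) ℝ) G =
      fromRows P 0 := by
    simp [fromBlocks_mul_fromRows, G, P, mul_nonsing_inv_cancel_left _ _ h₂₂.det_pos.ne'.isUnit]
  have hZ : fromBlocks S₁₁ S₁₂ S₁₂ᵀ S₂₂ * fromRows Z (0 : Matrix (Fin n) (Fin n) ℝ) =
      fromRows 1 (S₁₂ᵀ * Z) := by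
    simp [fromBlocks_mul_fromRows, Z, mul_nonsing_inv _ h₁₁.det_pos.ne'.isUnit]
  have hPpd : P.PosDef := hSgpd.of_mul_fromRows_one_eq hP
  refine ⟨P, Z, Ck * G, (S₁₂ᵀ * Z)ᵀ * Bk, hPpd, h₁₁.inv,
    stateFeedbackRiccati_of_closedLoop hsymm hP hric, ?_, fun μ hμ => ?_⟩
  · simpa only [Matrix.mul_assoc] using outputInjectionRiccati_of_closedLoop hsymm hZ hric
  · have hSP : S₁₁ - P = S₁₂ * S₂₂⁻¹ * S₁₂ᵀ := by simp [P, G, Matrix.mul_assoc]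
    have hmul (X Y : Matrix (Fin n) (Fin n) ℝ) :
        (X * Y).map Complex.ofReal = X.map Complex.ofReal * Y.map Complex.ofReal :=
      Matrix.map_mul (f := Complex.ofRealHom)
    refine norm_le_one_of_mem_spectrum_mul (Z := Z.map Complex.ofReal) h₁₁.map_ofReal ?_
      hPpd.posSemidef.map_ofReal ?_ (by rwa [← hmul])
    · rw [← hmul, mul_nonsing_inv _ h₁₁.det_pos.ne'.isUnit]
      exact Matrix.map_one _ Complex.ofReal_zero Complex.ofReal_one
    · rw [← Matrix.map_sub _ Complex.ofReal_sub, hSP]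
      simpa using (h₂₂.inv.posSemidef.mul_mul_conjTranspose_same S₁₂).map_ofReal

/-- Algebraic content of the necessity part of the NI output feedback
synthesis theorem: a positive definite solution `Σ` of the closed-loop NI ARE yields
`P > 0`, `Z > 0`, `F` and `L` satisfying conditions (a), (b), and the spectral radius
condition `ρ(ZP) ≤ 1`. -/
theorem stmt_12 {n m r : ℕ}
    (A Ak : Matrix (Fin n) (Fin n) ℝ)
    (B₁ Bk : Matrix (Fin n) (Fin m) ℝ) (B₂ : Matrix (Fin n) (Fin r) ℝ)
    (C₁ C₂ : Matrix (Fin m) (Fin n) ℝ) (Ck : Matrix (Fin r) (Fin n) ℝ)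
    (D₂₁ : Matrix (Fin m) (Fin m) ℝ)
    (R : Matrix (Fin m) (Fin m) ℝ) (hR : R = C₁ * B₁ + B₁ᵀ * C₁ᵀ) (hRu : IsUnit R.det)
    (Ac : Matrix (Fin n ⊕ Fin n) (Fin n ⊕ Fin n) ℝ)
    (hAc : Ac = fromBlocks A (B₂ * Ck) (Bk * C₂) Ak)
    (Bc : Matrix (Fin n ⊕ Fin n) (Fin m) ℝ) (hBc : Bc = fromRows B₁ (Bk * D₂₁))
    (Cc : Matrix (Fin m) (Fin n ⊕ Fin n) ℝ) (hCc : Cc = fromCols C₁ 0)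
    (S₁₁ S₁₂ S₂₂ : Matrix (Fin n) (Fin n) ℝ)
    (Sg : Matrix (Fin n ⊕ Fin n) (Fin n ⊕ Fin n) ℝ)
    (hSg : Sg = fromBlocks S₁₁ S₁₂ S₁₂ᵀ S₂₂) (hSgpd : Sg.PosDef)
    (hric : Sg * Ac + Acᵀ * Sg + (Bcᵀ * Sg - Cc * Ac)ᵀ * R⁻¹ * (Bcᵀ * Sg - Cc * Ac) = 0) :
    ∃ (P Z : Matrix (Fin n) (Fin n) ℝ) (F : Matrix (Fin r) (Fin n) ℝ)
      (L : Matrix (Fin n) (Fin m) ℝ),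
      P.PosDef ∧ Z.PosDef ∧
      (P * (A + B₂ * F) + (A + B₂ * F)ᵀ * P +
        (C₁ * (A + B₂ * F) - B₁ᵀ * P)ᵀ * R⁻¹ * (C₁ * (A + B₂ * F) - B₁ᵀ * P) = 0) ∧
      (Z * (A + L * C₂)ᵀ + (A + L * C₂) * Z +
        (B₁ + L * D₂₁ - Z * Aᵀ * C₁ᵀ) * R⁻¹ * (B₁ + L * D₂₁ - Z * Aᵀ * C₁ᵀ)ᵀ = 0) ∧
      (∀ lam : ℂ, lam ∈ spectrum ℂ ((Z * P).map (Complex.ofReal)) →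
        ‖lam‖ ≤ 1) :=
  stmt_12_general A Ak B₁ Bk B₂ C₁ C₂ Ck D₂₁ R Ac hAc Bc hBc Cc hCc S₁₁ S₁₂ S₂₂ Sg hSg hSgpd hric
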